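/- arXiv:1709.09281 — 3 statements merged into one kernel-verified Lean document; each statement's English description precedes it below -/
import Mathlib

section
/- The tropicalization of a Laurent polynomial with nonnegative coefficients is well-defined on quotients: if f, g, f', g' are nonzero Laurent polynomials with nonnegative coefficients and f·g' = f'·g, then f^t - g^t = (f')^t - (g')^t as functions on Z^n. -/
/-!
Tropicalization turns products into sums. With nonnegative coefficients nothing cancels in `f * g`,
so its support is the Minkowski sum of the supports of `f` and `g`, and the maximum of the
additive function `a ↦ ⟨a, ξ⟩` over a Minkowski sum is the sum of the two maxima. Applying this to
both sides of `f * g' = f' * g` gives the claim.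
-/

open Finset

/-- Formal Laurent polynomials in `n` variables over `ℚ`. -/
abbrev Laurent (n : ℕ) := AddMonoidAlgebra ℚ (Fin n → ℤ)

/-- The tropicalization of a Laurent polynomial: `f^t(ξ) = max{⟨a,ξ⟩ : c_a ≠ 0}`
(junk value `0` if `f = 0`). -/
noncomputable def trop {n : ℕ} (f : Laurent n) (ξ : Fin n → ℤ) : ℤ :=
  if h : f.coeff.support.Nonempty then f.coeff.support.sup' h (fun a => ∑ i, a i * ξ i) else 0

/-- `f` has nonnegative coefficients. -/
def Nonneg {n : ℕ} (f : Laurent n) : Prop := ∀ a, 0 ≤ f.coeff a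

open scoped Pointwise

theorem Finset.sup'_add_eq_sup'_add_sup' {G M : Type*} [Add G] [DecidableEq G] [AddCommMonoid M]
    [LinearOrder M] [IsOrderedAddMonoid M] {s t : Finset G} (hs : s.Nonempty) (ht : t.Nonempty)
    (F : G → M) (hF : ∀ a b, F (a + b) = F a + F b) :
    (s + t).sup' (hs.add ht) F = s.sup' hs F + t.sup' ht F := by
  refine le_antisymm (sup'_le _ _ ?_) ?_
  · intro c hc
    obtain ⟨a, ha, b, hb, rfl⟩ := mem_add.mp hc
    rw [hF]
    exact add_le_add (le_sup' F ha) (le_sup' F hb)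
  · obtain ⟨a, ha, hFa⟩ := exists_mem_eq_sup' hs F
    obtain ⟨b, hb, hFb⟩ := exists_mem_eq_sup' ht F
    rw [hFa, hFb, ← hF]
    exact le_sup' F (add_mem_add ha hb)

namespace AddMonoidAlgebra

variable {k G : Type*} [Semiring k] [PartialOrder k] [IsStrictOrderedRing k] [AddMonoid G]

theorem coeff_mul_pos_of_nonneg {x y : AddMonoidAlgebra k G} (hx : 0 ≤ x.coeff)
    (hy : 0 ≤ y.coeff) {a b : G} (ha : 0 < x.coeff a) (hb : 0 < y.coeff b) :
    0 < (x * y).coeff (a + b) := by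
  classical
  have hterm : ∀ m₁ m₂, 0 ≤ if m₁ + m₂ = a + b then x.coeff m₁ * y.coeff m₂ else 0 :=
    fun m₁ m₂ ↦ ite_nonneg (mul_nonneg (hx m₁) (hy m₂)) le_rfl
  rw [coeff_mul, Finsupp.sum]
  calc 0 < x.coeff a * y.coeff b := mul_pos ha hb
    _ = if a + b = a + b then x.coeff a * y.coeff b else 0 := (if_pos rfl).symm
    _ ≤ y.coeff.sum fun m₂ r₂ ↦ if a + m₂ = a + b then x.coeff a * r₂ else 0 :=
      single_le_sum (fun m₂ _ ↦ hterm a m₂) (Finsupp.mem_support_iff.mpr hb.ne')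
    _ ≤ _ := single_le_sum (f := fun m₁ ↦ y.coeff.sum fun m₂ r₂ ↦
          if m₁ + m₂ = a + b then x.coeff m₁ * r₂ else 0)
        (fun m₁ _ ↦ sum_nonneg fun m₂ _ ↦ hterm m₁ m₂) (Finsupp.mem_support_iff.mpr ha.ne')

theorem support_coeff_mul_of_nonneg [DecidableEq G] {x y : AddMonoidAlgebra k G}
    (hx : 0 ≤ x.coeff) (hy : 0 ≤ y.coeff) :
    (x * y).coeff.support = x.coeff.support + y.coeff.support := by
  refine (support_coeff_mul_subset x y).antisymm ?_
  intro c hc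
  obtain ⟨a, ha, b, hb, rfl⟩ := mem_add.mp hc
  rw [Finsupp.mem_support_iff] at ha hb ⊢
  exact (coeff_mul_pos_of_nonneg hx hy ((hx a).lt_of_ne' ha) ((hy b).lt_of_ne' hb)).ne'

end AddMonoidAlgebra

theorem trop_eq_sup' {n : ℕ} (f : Laurent n) (hf : f.coeff.support.Nonempty) (ξ : Fin n → ℤ) :
    trop f ξ = f.coeff.support.sup' hf (· ⬝ᵥ ξ) :=
  dif_pos hf

theorem trop_mul {n : ℕ} {f g : Laurent n} (hf : f ≠ 0) (hg : g ≠ 0)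
    (hfp : Nonneg f) (hgp : Nonneg g) (ξ : Fin n → ℤ) :
    trop (f * g) ξ = trop f ξ + trop g ξ := by
  classical
  have hfs : f.coeff.support.Nonempty := by simpa using hf
  have hgs : g.coeff.support.Nonempty := by simpa using hg
  have hsupp := AddMonoidAlgebra.support_coeff_mul_of_nonneg (x := f) (y := g) hfp hgp
  rw [trop_eq_sup' f hfs, trop_eq_sup' g hgs, trop_eq_sup' _ (hsupp ▸ hfs.add hgs)]
  simp_rw [hsupp]
  exact sup'_add_eq_sup'_add_sup' hfs hgs _ fun a b ↦ add_dotProduct a b ξ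

/-- Tropicalization is well defined on quotients: if `f·g' = f'·g` for nonzero Laurent
polynomials with nonnegative coefficients, then `f^t - g^t = (f')^t - (g')^t`. -/
theorem stmt2 {n : ℕ} (f g f' g' : Laurent n)
    (hf : f ≠ 0) (hg : g ≠ 0) (hf' : f' ≠ 0) (hg' : g' ≠ 0)
    (hfp : Nonneg f) (hgp : Nonneg g) (hfp' : Nonneg f') (hgp' : Nonneg g')
    (h : f * g' = f' * g) :
    ∀ ξ : Fin n → ℤ, trop f ξ - trop g ξ = trop f' ξ - trop g' ξ := by
  intro ξ
  have hsum : trop f ξ + trop g' ξ = trop f' ξ + trop g ξ := by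
    rw [← trop_mul hf hg' hfp hgp', ← trop_mul hf' hg hfp' hgp, h]
  linarith
end

section
/- The composition of the positive rational map F(t_1,t_2) = (t_1t_2/(t_1+t_2), t_2^2/(t_1+t_2)) with the positive Laurent polynomial f = (t_1^3+t_2^3)(t_1+t_2)/t_2^2 equals t_1^2 - t_1t_2 + t_2^2, which has a negative coefficient. Hence composition with a positive birational equivalence need not preserve the property of being a Laurent polynomial with nonnegative coefficients. -/
/-! Since `F₁ + F₂ = t₂` and `t₁³ + t₂³ = (t₁ + t₂)(t₁² - t₁t₂ + t₂²)`, all powers of `t₁ + t₂`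
in the denominators cancel. -/

open MvPolynomial

/-- The function field of the torus `(𝔾ₘ)²`. -/
abbrev TorusField2 := FractionRing (MvPolynomial (Fin 2) ℚ)

noncomputable def t1 : TorusField2 :=
  algebraMap (MvPolynomial (Fin 2) ℚ) TorusField2 (X 0)
noncomputable def t2 : TorusField2 :=
  algebraMap (MvPolynomial (Fin 2) ℚ) TorusField2 (X 1)

/-- First component of the positive map `F`: `t₁t₂/(t₁+t₂)`. -/
noncomputable def F1 : TorusField2 := t1 * t2 / (t1 + t2)
/-- Second component of the positive map `F`: `t₂²/(t₁+t₂)`. -/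
noncomputable def F2 : TorusField2 := t2 ^ 2 / (t1 + t2)

theorem substitution_eq_sq_sub_mul_add_sq {K : Type*} [Field K] {x y : K} (hy : y ≠ 0)
    (hxy : x + y ≠ 0) :
    ((x * y / (x + y)) ^ 3 + (y ^ 2 / (x + y)) ^ 3) * (x * y / (x + y) + y ^ 2 / (x + y)) /
      (y ^ 2 / (x + y)) ^ 2 = x ^ 2 - x * y + y ^ 2 := by
  field_simp
  ring

theorem MvPolynomial.X_add_X_ne_zero {σ R : Type*} [CommSemiring R] [Nontrivial R] {i j : σ}
    (hij : i ≠ j) : (X i + X j : MvPolynomial σ R) ≠ 0 := by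
  classical
  intro h
  have := congrArg (coeff (Finsupp.single i 1)) h
  simp [coeff_X, Finsupp.single_eq_single_iff, hij.symm] at this

theorem MvPolynomial.coeff_X_sq_sub_X_mul_X_add_X_sq {σ R : Type*} [CommRing R] {i j : σ}
    (hij : i ≠ j) :
    (X i ^ 2 - X i * X j + X j ^ 2 : MvPolynomial σ R).coeff
      (Finsupp.single i 1 + Finsupp.single j 1) = -1 := by
  classical
  have hi : Finsupp.single i 2 ≠ Finsupp.single i 1 + Finsupp.single j 1 := fun h => by
    simpa [hij] using DFunLike.congr_fun h j
  have hj : Finsupp.single j 2 ≠ Finsupp.single i 1 + Finsupp.single j 1 := fun h => by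
    simpa [hij] using DFunLike.congr_fun h i
  rw [coeff_add, coeff_sub, coeff_X_mul, coeff_X_pow, coeff_X_pow, coeff_X, if_neg hi, if_neg hj,
    if_pos rfl]
  ring

theorem t2_ne_zero : t2 ≠ 0 :=
  mt IsFractionRing.to_map_eq_zero_iff.1 (X_ne_zero 1)

theorem t1_add_t2_ne_zero : t1 + t2 ≠ 0 := by
  rw [t1, t2, ← map_add]
  exact mt IsFractionRing.to_map_eq_zero_iff.1 (X_add_X_ne_zero Fin.zero_ne_one)

/-- Substituting the positive map `F(t₁,t₂) = (t₁t₂/(t₁+t₂), t₂²/(t₁+t₂))` into the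
positive function `f = (t₁³+t₂³)(t₁+t₂)/t₂²` yields `t₁² - t₁t₂ + t₂²`, a polynomial
with a negative coefficient (the coefficient of `t₁t₂` is `-1`).  Hence composing with
a positive birational equivalence need not preserve positivity of Laurent coefficients. -/
theorem stmt7 :
    (F1 ^ 3 + F2 ^ 3) * (F1 + F2) / F2 ^ 2 = t1 ^ 2 - t1 * t2 + t2 ^ 2 ∧
    ((X 0 ^ 2 - X 0 * X 1 + X 1 ^ 2 : MvPolynomial (Fin 2) ℚ).coeff
      (Finsupp.single 0 1 + Finsupp.single 1 1)) = -1 :=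
  ⟨substitution_eq_sq_sub_mul_add_sq t2_ne_zero t1_add_t2_ne_zero,
    coeff_X_sq_sub_X_mul_X_add_X_sq Fin.zero_ne_one⟩
end

section
/- Exponential decay of dominated functions: let f be a Laurent polynomial in z_1,...,z_n weakly dominated by a potential Φ (each summand dominated). Then for every δ > 0 and every point (ξ, ν) with ξ in the open real cone C_Φ(R) and ν ∈ (S^1)^n, one has |f(e^{sξ_1+iν_1},...,e^{sξ_n+iν_n})| ≤ e^{-sδ'} for some δ' > 0 and all sufficiently large s; in particular f(e^{sξ+iν}) → 0 as s → ∞. -/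
open Finset Filter

/-- Real tropicalization of a formal Laurent polynomial (over `ℚ`):
`φ^t(ξ) = max{⟨a,ξ⟩ : φ_a ≠ 0}` for `ξ ∈ ℝⁿ` (junk value `0` if `φ = 0`). -/
noncomputable def tropR {n : ℕ} (φ : (Fin n → ℤ) →₀ ℚ) (ξ : Fin n → ℝ) : ℝ :=
  if h : φ.support.Nonempty then φ.support.sup' h (fun a => ∑ i, (a i : ℝ) * ξ i) else 0

/-- Evaluation of a Laurent polynomial `f` (complex coefficients) at the point
`(e^{sξ₁+iν₁}, …, e^{sξₙ+iνₙ})` of the complex torus. -/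
noncomputable def evalExp {n : ℕ} (f : (Fin n → ℤ) →₀ ℂ)
    (ξ : Fin n → ℝ) (ν : Fin n → ℝ) (s : ℝ) : ℂ :=
  ∑ a ∈ f.support, f a * Complex.exp (∑ i, (a i : ℂ) * (s * ξ i + Complex.I * ν i))

/-!
Each monomial `z^a` has modulus `e^{s⟨a,ξ⟩}` at `z = e^{sξ+iν}`, and domination says exactly
that `⟨a,ξ⟩ < 0` on the cone. A finite sum of exponentials with negative rates is `o(e^{-sδ})`
for any `δ > 0` below all the decay rates, hence eventually at most `e^{-sδ}`.
-/

open Asymptotics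

lemma norm_evalExp_le {n : ℕ} (f : (Fin n → ℤ) →₀ ℂ) (ξ ν : Fin n → ℝ) (s : ℝ) :
    ‖evalExp f ξ ν s‖ ≤ ∑ a ∈ f.support, ‖f a‖ * Real.exp (s * ∑ i, (a i : ℝ) * ξ i) := by
  refine (norm_sum_le _ _).trans_eq (sum_congr rfl fun a _ => ?_)
  rw [norm_mul, Complex.norm_exp, Complex.re_sum, mul_sum]
  congr 2
  refine sum_congr rfl fun i _ => ?_
  simp [Complex.mul_re]
  ring

lemma exists_pos_forall_lt_neg {ι : Type*} (S : Finset ι) (r : ι → ℝ) (hr : ∀ i ∈ S, r i < 0) :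
    ∃ δ > 0, ∀ i ∈ S, δ < -r i := by
  have h : ∀ᶠ δ in nhdsWithin (0 : ℝ) (Set.Ioi 0), ∀ i ∈ S, δ < -r i :=
    (eventually_all_finset S).2 fun i hi =>
      eventually_nhdsWithin_of_eventually_nhds (eventually_lt_nhds (by linarith [hr i hi]))
  obtain ⟨δ, hδS, hδ⟩ := (h.and self_mem_nhdsWithin).exists
  exact ⟨δ, hδ, hδS⟩

lemma exists_pos_isLittleO_sum_exp {ι : Type*} (S : Finset ι) (c r : ι → ℝ)
    (hr : ∀ i ∈ S, r i < 0) :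
    ∃ δ > 0, (fun s => ∑ i ∈ S, c i * Real.exp (s * r i)) =o[atTop]
      fun s => Real.exp (-(s * δ)) := by
  obtain ⟨δ, hδ, hδr⟩ := exists_pos_forall_lt_neg S r hr
  refine ⟨δ, hδ, ?_⟩
  have hterm : ∀ i ∈ S, (fun s => c i * Real.exp (s * r i)) =o[atTop]
      fun s => Real.exp (-(s * δ)) := fun i hi => by
    refine (Real.isLittleO_exp_comp_exp_comp.2 ?_).const_mul_left (c i)
    have hrate : 0 < -r i - δ := by linarith [hδr i hi]
    refine (tendsto_id.atTop_mul_const hrate).congr fun s => ?_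
    simp only [id]
    ring
  exact (IsLittleO.sum hterm).congr_left fun s => Finset.sum_apply s S _

lemma tendsto_zero_of_norm_le_exp_neg {E : Type*} [SeminormedAddCommGroup E] {g : ℝ → E}
    {δ : ℝ} (hδ : 0 < δ) (hg : ∀ᶠ s in atTop, ‖g s‖ ≤ Real.exp (-(s * δ))) :
    Tendsto g atTop (nhds 0) :=
  squeeze_zero_norm' hg <|
    Real.tendsto_exp_atBot.comp (tendsto_neg_atBot_iff.2 (tendsto_id.atTop_mul_const hδ))

theorem stmt16_general {n m : ℕ} (Φp Φq : Fin m → ((Fin n → ℤ) →₀ ℚ))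
    (f : (Fin n → ℤ) →₀ ℂ)
    (hdom : ∀ a ∈ f.support, ∀ ξ : Fin n → ℝ,
      (∀ k, tropR (Φp k) ξ - tropR (Φq k) ξ < 0) → ∑ i, (a i : ℝ) * ξ i < 0) :
    ∀ (ξ ν : Fin n → ℝ), (∀ k, tropR (Φp k) ξ - tropR (Φq k) ξ < 0) →
      (∃ δ' > (0 : ℝ), ∃ s₀ : ℝ, ∀ s ≥ s₀, ‖evalExp f ξ ν s‖ ≤ Real.exp (-(s * δ'))) ∧
      Tendsto (fun s => evalExp f ξ ν s) atTop (nhds 0) := by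
  intro ξ ν hξ
  obtain ⟨δ, hδ, hsmall⟩ := exists_pos_isLittleO_sum_exp f.support (fun a => ‖f a‖)
    (fun a => ∑ i, (a i : ℝ) * ξ i) fun a ha => hdom a ha ξ hξ
  have hbound : ∀ᶠ s in atTop, ‖evalExp f ξ ν s‖ ≤ Real.exp (-(s * δ)) := by
    filter_upwards [hsmall.bound one_pos] with s hs
    rw [one_mul, Real.norm_of_nonneg (Real.exp_pos _).le] at hs
    exact (norm_evalExp_le f ξ ν s).trans ((le_abs_self _).trans hs)
  exact ⟨⟨δ, hδ, eventually_atTop.1 hbound⟩, tendsto_zero_of_norm_le_exp_neg hδ hbound⟩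

/-- Exponential decay of dominated functions.  Let `Φ` be a potential given by ratios
`Φp k / Φq k` of positive Laurent polynomials, with open real cone
`C_Φ(ℝ) = {ξ : Φ^t(ξ) < 0}`, and let `f` be a Laurent polynomial each of whose
monomials is dominated by `Φ` (i.e. `⟨a,ξ⟩ < 0` on the cone for every `a` in the
support of `f`).  Then for every point `(ξ,ν)` with `ξ ∈ C_Φ(ℝ)` there is `δ' > 0` with
`|f(e^{sξ+iν})| ≤ e^{-sδ'}` for all sufficiently large `s`; in particular
`f(e^{sξ+iν}) → 0` as `s → ∞`. -/
theorem stmt16 {n m : ℕ} (Φp Φq : Fin m → ((Fin n → ℤ) →₀ ℚ))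
    (hΦp : ∀ k, Φp k ≠ 0) (hΦq : ∀ k, Φq k ≠ 0)
    (hΦpp : ∀ k a, 0 ≤ Φp k a) (hΦqp : ∀ k a, 0 ≤ Φq k a)
    (f : (Fin n → ℤ) →₀ ℂ)
    (hdom : ∀ a ∈ f.support, ∀ ξ : Fin n → ℝ,
      (∀ k, tropR (Φp k) ξ - tropR (Φq k) ξ < 0) → ∑ i, (a i : ℝ) * ξ i < 0) :
    ∀ (ξ ν : Fin n → ℝ), (∀ k, tropR (Φp k) ξ - tropR (Φq k) ξ < 0) →
      (∃ δ' > (0 : ℝ), ∃ s₀ : ℝ, ∀ s ≥ s₀, ‖evalExp f ξ ν s‖ ≤ Real.exp (-(s * δ'))) ∧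
      Tendsto (fun s => evalExp f ξ ν s) atTop (nhds 0) :=
  stmt16_general Φp Φq f hdom
end
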